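/- If an affine IFS F = (ℝ^m; f_1, …, f_N) has an attractor (a nonempty compact set A with A = ⋃ f_n(A) and F^{∘k}(B) → A in Hausdorff distance for every nonempty compact B), then there exists a convex body K ⊆ ℝ^m with f_n(K) ⊆ int(K) for all n. -/
import Mathlib


/-- The Hutchinson set map `F(B) = ⋃ₙ fₙ(B)` of an IFS. -/
def ifsSetMap {E : Type*} {N : ℕ} (f : Fin N → E → E) (B : Set E) : Set E :=
  ⋃ n : Fin N, f n '' B

/-- The image of a closed thickening under a map with Lipschitz-type bound `c`,
for a compact nonempty base set. -/
lemma aux_image_cthickening {E : Type*} [MetricSpace E] {f : E → E} {c : ℝ} (hc : 0 ≤ c)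
    (hf : ∀ x y, dist (f x) (f y) ≤ c * dist x y) {s : Set E}
    (hs : IsCompact s) (hne : s.Nonempty) {r : ℝ} (hr : 0 ≤ r) :
    f '' Metric.cthickening r s ⊆ Metric.cthickening (c * r) (f '' s) := by
  rintro _ ⟨x, hx, rfl⟩
  have h2 := Metric.mem_cthickening_iff.1 hx
  have h3 : Metric.infDist x s ≤ r := by
    calc Metric.infDist x s = (EMetric.infEdist x s).toReal := rfl
      _ ≤ (ENNReal.ofReal r).toReal := ENNReal.toReal_mono ENNReal.ofReal_ne_top h2
      _ = r := ENNReal.toReal_ofReal hr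
  obtain ⟨y, hy, hxy⟩ := hs.exists_infDist_eq_dist hne x
  have hdy : dist x y ≤ r := by rw [← hxy]; exact h3
  refine Metric.mem_cthickening_of_dist_le (f x) (f y) _ _ ⟨y, hy, rfl⟩ ?_
  exact (hf x y).trans (mul_le_mul_of_nonneg_left hdy hc)

/-- Thickening of a convex hull is contained in the convex hull of the thickening. -/
lemma aux_thickening_convexHull {E : Type*} [NormedAddCommGroup E] [NormedSpace ℝ E]
    (η : ℝ) (T : Set E) :
    Metric.thickening η (convexHull ℝ T) ⊆ convexHull ℝ (Metric.thickening η T) := by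
  intro y hy
  obtain ⟨z, hz, hyz⟩ := Metric.mem_thickening_iff.1 hy
  set g : E →ᵃ[ℝ] E := AffineMap.const ℝ E (y - z) + AffineMap.id ℝ E with hgdef
  have hg : ∀ x, g x = (y - z) + x := fun x => by simp [hgdef]
  have hy' : y ∈ ⇑g '' (convexHull ℝ T) := ⟨z, hz, by rw [hg]; abel⟩
  rw [AffineMap.image_convexHull] at hy'
  refine convexHull_mono ?_ hy'
  rintro _ ⟨t, ht, rfl⟩
  rw [Metric.mem_thickening_iff]
  refine ⟨t, ht, ?_⟩
  rw [hg]
  have : dist (y - z + t) t = dist y z := by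
    simp [dist_eq_norm]
  rw [this]; exact hyz

theorem attractor_implies_topologically_contractive (m N : ℕ)
    (f : Fin N → EuclideanSpace ℝ (Fin m) → EuclideanSpace ℝ (Fin m))
    (hf_affine : ∀ n, ∃ g : EuclideanSpace ℝ (Fin m) →ᵃ[ℝ] EuclideanSpace ℝ (Fin m),
      f n = g)
    (A : Set (EuclideanSpace ℝ (Fin m))) (hA_ne : A.Nonempty) (hA_c : IsCompact A)
    (hA_fix : A = ifsSetMap f A)
    (hA_attr : ∀ B : Set (EuclideanSpace ℝ (Fin m)), B.Nonempty → IsCompact B →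
      Filter.Tendsto (fun k => Metric.hausdorffDist ((ifsSetMap f)^[k] B) A)
        Filter.atTop (nhds 0)) :
    ∃ K : Set (EuclideanSpace ℝ (Fin m)),
      IsCompact K ∧ Convex ℝ K ∧ (interior K).Nonempty ∧
      ∀ n : Fin N, f n '' K ⊆ interior K := by
  classical
  -- N is positive
  have hN : 0 < N := by
    obtain ⟨x, hx⟩ := hA_ne
    rw [hA_fix] at hx
    simp only [ifsSetMap, Set.mem_iUnion] at hx
    obtain ⟨n, -⟩ := hx
    exact n.pos
  -- Lipschitz constants
  have hLip : ∀ n, ∃ c : ℝ, 0 ≤ c ∧ ∀ x y, dist (f n x) (f n y) ≤ c * dist x y := by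
    intro n
    obtain ⟨g, hg⟩ := hf_affine n
    set T := LinearMap.toContinuousLinearMap g.linear with hT
    refine ⟨‖T‖, norm_nonneg _, fun x y => ?_⟩
    have h1 : g x - g y = g.linear (x - y) := by
      have h := g.linearMap_vsub x y
      simpa [vsub_eq_sub] using h.symm
    rw [hg, dist_eq_norm, dist_eq_norm, h1]
    have h2 : g.linear (x - y) = T (x - y) := by rw [hT, LinearMap.coe_toContinuousLinearMap']
    rw [h2]
    exact T.le_opNorm _
  choose c hc0 hcLip using hLip
  set L : ℝ := 1 + ∑ n, c n with hLdef
  have hsum0 : 0 ≤ ∑ n, c n := Finset.sum_nonneg fun n _ => hc0 n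
  have hL1 : (1 : ℝ) ≤ L := le_add_of_nonneg_right hsum0
  have hL0 : (0 : ℝ) ≤ L := zero_le_one.trans hL1
  have hLL : (0 : ℝ) < L + 1 := by linarith
  have hcL : ∀ n, c n ≤ L := by
    intro n
    have : c n ≤ ∑ n, c n :=
      Finset.single_le_sum (fun i _ => hc0 i) (Finset.mem_univ n)
    linarith
  have hLipL : ∀ n x y, dist (f n x) (f n y) ≤ L * dist x y := fun n x y =>
    (hcLip n x y).trans (mul_le_mul_of_nonneg_right (hcL n) dist_nonneg)
  have hfc : ∀ n, Continuous (f n) := by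
    intro n
    have : LipschitzWith (Real.toNNReal L) (f n) := by
      rw [lipschitzWith_iff_dist_le_mul]
      intro x y
      rw [Real.coe_toNNReal _ hL0]
      exact hLipL n x y
    exact this.continuous
  -- basic sets
  set C : Set (EuclideanSpace ℝ (Fin m)) := convexHull ℝ A with hCdef
  have hAC : A ⊆ C := subset_convexHull ℝ A
  have hC_ne : C.Nonempty := hA_ne.mono hAC
  have hC_bdd : Bornology.IsBounded C := isBounded_convexHull.2 hA_c.isBounded
  set B : Set (EuclideanSpace ℝ (Fin m)) := Metric.cthickening 1 C with hBdef
  have hB_c : IsCompact B :=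
    Metric.isCompact_of_isClosed_isBounded Metric.isClosed_cthickening hC_bdd.cthickening
  have hCB : C ⊆ B := Metric.self_subset_cthickening C
  have hB_ne : B.Nonempty := hC_ne.mono hCB
  -- iterates
  have hF_c : ∀ s : Set (EuclideanSpace ℝ (Fin m)), IsCompact s → IsCompact (ifsSetMap f s) := fun s hs =>
    isCompact_iUnion fun n => hs.image (hfc n)
  have hF_ne : ∀ s : Set (EuclideanSpace ℝ (Fin m)), s.Nonempty → (ifsSetMap f s).Nonempty := by
    rintro s ⟨x, hx⟩
    exact ⟨f ⟨0, hN⟩ x, Set.mem_iUnion.2 ⟨⟨0, hN⟩, ⟨x, hx, rfl⟩⟩⟩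
  set S : ℕ → Set (EuclideanSpace ℝ (Fin m)) := fun j => (ifsSetMap f)^[j] B with hSdef
  have hS_succ : ∀ j, S (j + 1) = ifsSetMap f (S j) := fun j =>
    Function.iterate_succ_apply' (ifsSetMap f) j B
  have hS_c : ∀ j, IsCompact (S j) := by
    intro j
    induction j with
    | zero => exact hB_c
    | succ j ih => rw [hS_succ]; exact hF_c _ ih
  have hS_ne : ∀ j, (S j).Nonempty := by
    intro j
    induction j with
    | zero => exact hB_ne
    | succ j ih => rw [hS_succ]; exact hF_ne _ ih
  have hS_step : ∀ (n : Fin N) (j : ℕ), f n '' S j ⊆ S (j + 1) := by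
    intro n j
    rw [hS_succ]
    exact Set.subset_iUnion (fun n => f n '' S j) n
  -- choose k
  obtain ⟨k, hk1, hkdist⟩ : ∃ k, 1 ≤ k ∧ Metric.hausdorffDist (S k) A < 1 / 2 := by
    have h := hA_attr B hB_ne hB_c
    have h2 : ∀ᶠ j in Filter.atTop,
        Metric.hausdorffDist ((ifsSetMap f)^[j] B) A < 1 / 2 :=
      h.eventually (gt_mem_nhds (by norm_num : (0 : ℝ) < 1 / 2))
    obtain ⟨k, hk1, hk2⟩ := ((Filter.eventually_ge_atTop 1).and h2).exists
    exact ⟨k, hk1, hk2⟩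
  have hSk : S k ⊆ Metric.cthickening (1 / 2) C := by
    intro x hx
    have hnet : EMetric.hausdorffEdist (S k) A ≠ ⊤ :=
      Metric.hausdorffEdist_ne_top_of_nonempty_of_bounded (hS_ne k) hA_ne
        (hS_c k).isBounded hA_c.isBounded
    have h1 : Metric.infDist x A ≤ Metric.hausdorffDist (S k) A :=
      Metric.infDist_le_hausdorffDist_of_mem hx hnet
    have h2 : x ∈ Metric.thickening (1 / 2) A :=
      (Metric.mem_thickening_iff_infDist_lt hA_ne).2 (h1.trans_lt hkdist)
    exact Metric.thickening_subset_cthickening _ _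
      (Metric.thickening_subset_of_subset _ hAC h2)
  -- delta and eta
  set δ : ℝ := 1 / (2 * (L + 1) ^ k) with hδdef
  have hpow_pos : ∀ j : ℕ, (0 : ℝ) < (L + 1) ^ j := fun j => pow_pos hLL j
  have hpow_ge1 : ∀ j : ℕ, (1 : ℝ) ≤ (L + 1) ^ j := fun j =>
    one_le_pow₀ (by linarith)
  have hδ0 : 0 < δ := by positivity
  have hδj_pos : ∀ j : ℕ, 0 < δ * (L + 1) ^ j := fun j => by positivity
  have hδ_le : ∀ j : ℕ, δ ≤ δ * (L + 1) ^ j := fun j => by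
    nlinarith [hpow_ge1 j, hδ0]
  set η : ℝ := min δ (1 / (2 * (L + 1))) with hηdef
  have hη0 : 0 < η := lt_min hδ0 (by positivity)
  have hηδ : η ≤ δ := min_le_left _ _
  -- key wrap arithmetic
  have hLδk : L * (δ * (L + 1) ^ (k - 1)) = L / (2 * (L + 1)) := by
    have hk' : k - 1 + 1 = k := Nat.sub_add_cancel hk1
    have hps : (L + 1) ^ k = (L + 1) ^ (k - 1) * (L + 1) := by
      rw [← pow_succ, hk']
    rw [hδdef, hps]
    have h1 : (0 : ℝ) < (L + 1) ^ (k - 1) := hpow_pos _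
    field_simp
  have hwrap : η + L * (δ * (L + 1) ^ (k - 1)) + 1 / 2 ≤ 1 := by
    have h1 : η ≤ 1 / (2 * (L + 1)) := min_le_right _ _
    rw [hLδk]
    have h2 : 1 / (2 * (L + 1)) + L / (2 * (L + 1)) = 1 / 2 := by
      field_simp
      ring
    linarith
  -- the pieces
  set Kc : ℕ → Set (EuclideanSpace ℝ (Fin m)) := fun j => Metric.cthickening (δ * (L + 1) ^ j) (S j) with hKcdef
  set U : Set (EuclideanSpace ℝ (Fin m)) := ⋃ j ∈ Set.Iio k, Kc j with hUdef
  set K : Set (EuclideanSpace ℝ (Fin m)) := closure (convexHull ℝ U) with hKdef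
  set M : ℕ → Set (EuclideanSpace ℝ (Fin m)) := fun j =>
    Metric.cthickening (L * (δ * (L + 1) ^ j)) (S (j + 1)) with hMdef
  set MU : Set (EuclideanSpace ℝ (Fin m)) := ⋃ j ∈ Set.Iio k, M j with hMUdef
  -- chain: f n image of Kc j lands in M j
  have hchain : ∀ (n : Fin N) (j : ℕ), f n '' Kc j ⊆ M j := by
    intro n j
    have h1 := aux_image_cthickening (hc0 n) (hcLip n) (hS_c j) (hS_ne j)
      (le_of_lt (hδj_pos j))
    refine h1.trans ?_
    refine (Metric.cthickening_mono
      (mul_le_mul_of_nonneg_right (hcL n) (le_of_lt (hδj_pos j))) _).trans ?_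
    exact Metric.cthickening_subset_of_subset _ (hS_step n j)
  -- margin: thickening η of M j lands back in U
  have hM_sub : ∀ j < k, Metric.thickening η (M j) ⊆ U := by
    intro j hj
    have h1 : Metric.thickening η (M j) ⊆
        Metric.thickening (η + L * (δ * (L + 1) ^ j)) (S (j + 1)) :=
      Metric.thickening_cthickening_subset η (by positivity) _
    by_cases hjk : j + 1 < k
    · refine h1.trans ?_
      have harith : η + L * (δ * (L + 1) ^ j) ≤ δ * (L + 1) ^ (j + 1) := by
        have h2 : δ * (L + 1) ^ (j + 1) = L * (δ * (L + 1) ^ j) + δ * (L + 1) ^ j := by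
          rw [pow_succ]; ring
        have h3 := hδ_le j
        linarith [hηδ]
      refine (Metric.thickening_mono harith _).trans ?_
      refine (Metric.thickening_subset_cthickening _ _).trans ?_
      rw [hUdef]
      exact Set.subset_biUnion_of_mem (u := fun j => Kc j) (Set.mem_Iio.2 hjk)
    · have hjk' : j + 1 = k := by omega
      have hj' : j = k - 1 := by omega
      refine h1.trans ?_
      rw [hjk']
      have h2 : Metric.thickening (η + L * (δ * (L + 1) ^ j)) (S k) ⊆
          Metric.thickening (η + L * (δ * (L + 1) ^ j)) (Metric.cthickening (1 / 2) C) :=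
        Metric.thickening_subset_of_subset _ hSk
      refine h2.trans ?_
      have h3 : Metric.thickening (η + L * (δ * (L + 1) ^ j))
          (Metric.cthickening (1 / 2) C) ⊆
          Metric.thickening (η + L * (δ * (L + 1) ^ j) + 1 / 2) C :=
        Metric.thickening_cthickening_subset _ (by norm_num) _
      refine h3.trans ?_
      have h4 : η + L * (δ * (L + 1) ^ j) + 1 / 2 ≤ 1 := by rw [hj']; exact hwrap
      refine (Metric.thickening_mono h4 _).trans ?_
      refine (Metric.thickening_subset_cthickening _ _).trans ?_
      have h5 : (Metric.cthickening 1 C : Set (EuclideanSpace ℝ (Fin m))) = S 0 := rfl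
      rw [h5]
      refine (Metric.self_subset_cthickening (δ := δ * (L + 1) ^ 0) (S 0)).trans ?_
      rw [hUdef]
      exact Set.subset_biUnion_of_mem (u := fun j => Kc j) (Set.mem_Iio.2 (by omega))
  -- U is compact
  have hU_c : IsCompact U := by
    refine (Set.finite_Iio k).isCompact_biUnion fun j _ => ?_
    exact (hS_c j).cthickening
  have hK_c : IsCompact K :=
    Metric.isCompact_of_isClosed_isBounded isClosed_closure
      ((isBounded_convexHull.2 hU_c.isBounded).closure)
  have hK_conv : Convex ℝ K := (convex_convexHull ℝ U).closure
  -- thickening 1 C sits inside K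
  have hth1K : Metric.thickening 1 C ⊆ K := by
    refine (Metric.thickening_subset_cthickening 1 C).trans ?_
    have h5 : (Metric.cthickening 1 C : Set (EuclideanSpace ℝ (Fin m))) = S 0 := rfl
    rw [h5]
    refine (Metric.self_subset_cthickening (δ := δ * (L + 1) ^ 0) (S 0)).trans ?_
    refine (Set.subset_biUnion_of_mem (u := fun j => Kc j)
      (Set.mem_Iio.2 (by omega : 0 < k))).trans ?_
    exact (subset_convexHull ℝ U).trans subset_closure
  refine ⟨K, hK_c, hK_conv, ?_, ?_⟩
  · obtain ⟨x, hx⟩ := hA_ne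
    have hxC : x ∈ Metric.thickening 1 C :=
      Metric.self_subset_thickening one_pos C (hAC hx)
    exact ⟨x, interior_maximal hth1K Metric.isOpen_thickening hxC⟩
  · intro n
    -- f n '' K ⊆ closure (convexHull MU)
    have h1 : f n '' K ⊆ closure (convexHull ℝ MU) := by
      obtain ⟨g, hg⟩ := hf_affine n
      refine (image_closure_subset_closure_image (hfc n)).trans ?_
      refine closure_mono ?_
      rw [hg, AffineMap.image_convexHull, ← hg]
      refine convexHull_mono ?_
      rw [hUdef, Set.image_iUnion₂]
      exact Set.iUnion₂_mono fun j _ => hchain n j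
    intro x hx
    have hx2 : x ∈ closure (convexHull ℝ MU) := h1 hx
    have hball : Metric.ball x η ⊆ K := by
      intro y hy
      have hy1 : y ∈ Metric.thickening η (closure (convexHull ℝ MU)) :=
        Metric.mem_thickening_iff.2 ⟨x, hx2, Metric.mem_ball.1 hy⟩
      rw [Metric.thickening_closure] at hy1
      have hy2 : y ∈ convexHull ℝ (Metric.thickening η MU) :=
        aux_thickening_convexHull η _ hy1
      have hsub : Metric.thickening η MU ⊆ U := by
        intro w hw
        obtain ⟨z, hz, hd⟩ := Metric.mem_thickening_iff.1 hw
        simp only [hMUdef, Set.mem_iUnion, Set.mem_Iio] at hz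
        obtain ⟨j, hj, hzj⟩ := hz
        exact hM_sub j hj (Metric.mem_thickening_iff.2 ⟨z, hzj, hd⟩)
      have hy3 : y ∈ convexHull ℝ U := convexHull_mono hsub hy2
      exact subset_closure hy3
    exact interior_maximal hball Metric.isOpen_ball (Metric.mem_ball_self hη0)
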